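/- Let Σ be a symmetric positive semidefinite d×d matrix partitioned into L×L blocks Σ_{ℓk} with each diagonal block Σ_{ℓℓ} ≻ 0 of size d_ℓ. Let σ_ℓ = tr(Σ_ℓℓ)/d_ℓ, and let P_ℓ be the orthogonal projection onto the eigenvectors of Σ_ℓℓ with eigenvalue ≤ 2σ_ℓ. Then the whitened coupling M = D^{-1/2}(Σ - D)D^{-1/2} (D the block-diagonal of Σ) satisfies ‖M‖₂ ≥ ( (1/(4d)) Σ_{ℓ≠k} ‖P_ℓ Σ_{ℓk} P_k‖_F² / (σ_ℓ σ_k) )^{1/2}. -/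

import Mathlib

open Matrix MeasureTheory BigOperators
noncomputable section

/-- Euclidean (spectral / operator) norm of a real square matrix. -/
def opN {n : Type*} [Fintype n] [DecidableEq n] (A : Matrix n n ℝ) : ℝ :=
  ‖Matrix.toEuclideanCLM (𝕜 := ℝ) A‖

/-- Euclidean norm of a vector. -/
def vN {n : Type*} [Fintype n] (v : n → ℝ) : ℝ := Real.sqrt (∑ i, v i ^ 2)

/-- Frobenius norm of a rectangular real matrix. -/
def frobN {m k : Type*} [Fintype m] [Fintype k] (A : Matrix m k ℝ) : ℝ :=
  Real.sqrt (∑ i, ∑ j, A i j ^ 2)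

/-- The positive semidefinite square root of a positive semidefinite matrix
(the definition `Matrix.PosSemidef.sqrt` of the older Mathlib, removed since). -/
def Matrix.PosSemidef.sqrt {n : Type*} [Fintype n] [DecidableEq n]
    {A : Matrix n n ℝ} (hA : A.PosSemidef) : Matrix n n ℝ :=
  hA.1.eigenvectorUnitary.1 * diagonal ((↑) ∘ (Real.sqrt ·) ∘ hA.1.eigenvalues) *
    (star hA.1.eigenvectorUnitary : Matrix n n ℝ)

/-
Reindex `n` as `Σ ℓ, {i // blk i = ℓ}`; then `D` is literally `blockDiagonal'` of the blocks
`Σ_ℓℓ = U_ℓ diag(λ_ℓ) U_ℓᵀ`, so `D^{-1/2}` is `blockDiagonal'` of `W_ℓ = U_ℓ diag(λ_ℓ^{-1/2}) U_ℓᵀ`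
and the off-diagonal block `(ℓ, k)` of `M` is `W_ℓ Σ_ℓk W_k`. The projector factors as
`P_ℓ = R_ℓ W_ℓ = W_ℓ R_ℓ` with `R_ℓ = U_ℓ diag(1[λ ≤ 2σ_ℓ] √λ) U_ℓᵀ`, and `‖R_ℓ‖₂² ≤ 2σ_ℓ` because
`P_ℓ` keeps only eigenvalues `≤ 2σ_ℓ`. Multiplying by a matrix of operator norm `r` scales the
Frobenius norm by at most `r`, hence `‖P_ℓ Σ_ℓk P_k‖_F² ≤ 4 σ_ℓ σ_k ‖M_ℓk‖_F²`. Summing over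
`ℓ ≠ k` gives at most `4 ‖M‖_F² ≤ 4 d ‖M‖₂²`.
-/

def frobSq {m k : Type*} [Fintype m] [Fintype k] (A : Matrix m k ℝ) : ℝ :=
  ∑ i, ∑ j, A i j ^ 2

section Frobenius

variable {m k : Type*} [Fintype m] [Fintype k]

lemma frobSq_nonneg (A : Matrix m k ℝ) : 0 ≤ frobSq A := by
  unfold frobSq; positivity

lemma frobN_sq (A : Matrix m k ℝ) : frobN A ^ 2 = frobSq A :=
  Real.sq_sqrt (frobSq_nonneg A)

lemma frobSq_transpose (A : Matrix m k ℝ) : frobSq Aᵀ = frobSq A :=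
  Finset.sum_comm

lemma frobSq_eq_sum_dotProduct_col (A : Matrix m k ℝ) :
    frobSq A = ∑ j, Aᵀ j ⬝ᵥ Aᵀ j := by
  rw [← frobSq_transpose]
  simp [frobSq, dotProduct, sq]

lemma frobSq_mul_le_left (R : Matrix m m ℝ) (X : Matrix m k ℝ) {c : ℝ}
    (hR : ∀ x, (R *ᵥ x) ⬝ᵥ (R *ᵥ x) ≤ c * (x ⬝ᵥ x)) :
    frobSq (R * X) ≤ c * frobSq X := by
  have hcol : ∀ j, (R * X)ᵀ j = R *ᵥ Xᵀ j := fun j => by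
    ext i; simp [mul_apply, mulVec, dotProduct]
  simp only [frobSq_eq_sum_dotProduct_col, hcol, Finset.mul_sum]
  exact Finset.sum_le_sum fun j _ => hR _

lemma frobSq_mul_le_right (X : Matrix m k ℝ) (R : Matrix k k ℝ) {c : ℝ} (hRT : Rᵀ = R)
    (hR : ∀ x, (R *ᵥ x) ⬝ᵥ (R *ᵥ x) ≤ c * (x ⬝ᵥ x)) :
    frobSq (X * R) ≤ c * frobSq X := by
  rw [← frobSq_transpose, transpose_mul, hRT, ← frobSq_transpose X]
  exact frobSq_mul_le_left R Xᵀ hR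

lemma frobSq_submatrix_equiv {m' k' : Type*} [Fintype m'] [Fintype k'] (A : Matrix m k ℝ)
    (e : m' ≃ m) (f : k' ≃ k) : frobSq (A.submatrix e f) = frobSq A := by
  simp only [frobSq, submatrix_apply]
  rw [← e.sum_comp]
  exact Finset.sum_congr rfl fun i _ => f.sum_comp (fun j => A (e i) j ^ 2)

end Frobenius

section OperatorNorm

variable {n : Type*} [Fintype n] [DecidableEq n]

lemma dotProduct_transpose_self_le_opN_sq (A : Matrix n n ℝ) (j : n) :
    Aᵀ j ⬝ᵥ Aᵀ j ≤ opN A ^ 2 := by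
  have hAe : toEuclideanCLM (𝕜 := ℝ) A (EuclideanSpace.single j 1) = WithLp.toLp 2 (Aᵀ j) := by
    ext i; simp [EuclideanSpace.single, mulVec, dotProduct]
  have h := (toEuclideanCLM (𝕜 := ℝ) A).le_opNorm (EuclideanSpace.single j 1)
  rw [hAe, PiLp.norm_single, norm_one, mul_one] at h
  calc Aᵀ j ⬝ᵥ Aᵀ j = ‖WithLp.toLp 2 (Aᵀ j)‖ ^ 2 := by
        rw [EuclideanSpace.real_norm_sq_eq]; simp [dotProduct, sq]
    _ ≤ opN A ^ 2 := by gcongr; exact h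

lemma sqrt_frobSq_div_card_le_opN (A : Matrix n n ℝ) :
    √(frobSq A / Fintype.card n) ≤ opN A := by
  refine Real.sqrt_le_iff.mpr
    ⟨norm_nonneg _, div_le_of_le_mul₀ (Nat.cast_nonneg _) (sq_nonneg _) ?_⟩
  rw [frobSq_eq_sum_dotProduct_col]
  calc ∑ j, Aᵀ j ⬝ᵥ Aᵀ j ≤ ∑ _j : n, opN A ^ 2 :=
        Finset.sum_le_sum fun j _ => dotProduct_transpose_self_le_opN_sq A j
    _ = _ := by simp [mul_comm]

end OperatorNorm

def spectralMatrix {m : Type*} [Fintype m] [DecidableEq m] (U : Matrix m m ℝ) (f : m → ℝ) :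
    Matrix m m ℝ :=
  U * diagonal f * Uᵀ

section Spectral

variable {m : Type*} [Fintype m] [DecidableEq m] {U : Matrix m m ℝ}

lemma spectralMatrix_transpose (U : Matrix m m ℝ) (f : m → ℝ) :
    (spectralMatrix U f)ᵀ = spectralMatrix U f := by
  simp [spectralMatrix, transpose_mul, Matrix.mul_assoc]

lemma spectralMatrix_mul (hU : Uᵀ * U = 1) (f g : m → ℝ) :
    spectralMatrix U f * spectralMatrix U g = spectralMatrix U (f * g) := by
  simp only [spectralMatrix, Matrix.mul_assoc]
  rw [← Matrix.mul_assoc Uᵀ, hU, Matrix.one_mul, ← Matrix.mul_assoc (diagonal f),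
    diagonal_mul_diagonal]
  rfl

lemma spectralMatrix_one (hU : Uᵀ * U = 1) : spectralMatrix U 1 = 1 := by
  simp [spectralMatrix, mul_eq_one_comm.mp hU]

lemma spectralMatrix_mulVec_dotProduct_le (hU : Uᵀ * U = 1) {f : m → ℝ} {c : ℝ}
    (hf : ∀ i, f i ^ 2 ≤ c) (x : m → ℝ) :
    (spectralMatrix U f *ᵥ x) ⬝ᵥ (spectralMatrix U f *ᵥ x) ≤ c * (x ⬝ᵥ x) := by
  have hUT : Uᵀᵀ * Uᵀ = 1 := by rw [transpose_transpose, mul_eq_one_comm.mp hU]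
  have isometry : ∀ {V : Matrix m m ℝ}, Vᵀ * V = 1 → ∀ y, (V *ᵥ y) ⬝ᵥ (V *ᵥ y) = y ⬝ᵥ y :=
    fun hV y => by rw [dotProduct_mulVec, vecMul_mulVec, hV, vecMul_one]
  set y := Uᵀ *ᵥ x
  rw [spectralMatrix, ← mulVec_mulVec, ← mulVec_mulVec, isometry hU, ← isometry hUT x]
  simp only [mulVec_diagonal, dotProduct, Finset.mul_sum]
  refine Finset.sum_le_sum fun i _ => ?_
  nlinarith [hf i, mul_self_nonneg (y i)]

lemma posSemidef_spectralMatrix {f : m → ℝ} (hf : 0 ≤ f) : (spectralMatrix U f).PosSemidef := by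
  simpa [spectralMatrix] using (PosSemidef.diagonal hf).mul_mul_conjTranspose_same U

lemma pos_of_posDef_spectralMatrix (hU : Uᵀ * U = 1) {f : m → ℝ}
    (hf : (spectralMatrix U f).PosDef) (i : m) : 0 < f i := by
  have hinj : Function.Injective U.mulVec := Function.LeftInverse.injective (g := Uᵀ.mulVec)
    fun x => by rw [mulVec_mulVec, hU, one_mulVec]
  have hdiag := hf.conjTranspose_mul_mul_same hinj
  rw [conjTranspose_eq_transpose_of_trivial, spectralMatrix] at hdiag
  simp only [← Matrix.mul_assoc, hU, Matrix.one_mul] at hdiag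
  rw [Matrix.mul_assoc, hU, Matrix.mul_one, posDef_diagonal_iff] at hdiag
  exact hdiag i

end Spectral

section Projection

variable {m k : Type*} [Fintype m] [DecidableEq m] [Fintype k] [DecidableEq k]

lemma spectralMatrix_indicator_eq_mul {U : Matrix m m ℝ} (hU : Uᵀ * U = 1) {lam : m → ℝ}
    (hlam : ∀ i, 0 < lam i) (s : ℝ) :
    spectralMatrix U (fun i => if lam i ≤ s then 1 else 0) =
      spectralMatrix U (fun i => if lam i ≤ s then √(lam i) else 0) *
        spectralMatrix U (fun i => (√(lam i))⁻¹) := by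
  rw [spectralMatrix_mul hU]
  congr 1
  ext i
  have := (Real.sqrt_pos.mpr (hlam i)).ne'
  split_ifs with h <;> simp [h, this]

lemma spectralMatrix_truncSqrt_mulVec_dotProduct_le {U : Matrix m m ℝ} (hU : Uᵀ * U = 1)
    {lam : m → ℝ} (hlam : ∀ i, 0 < lam i) {s : ℝ} (hs : 0 ≤ s) (x : m → ℝ) :
    (spectralMatrix U (fun i => if lam i ≤ s then √(lam i) else 0) *ᵥ x) ⬝ᵥ
      (spectralMatrix U (fun i => if lam i ≤ s then √(lam i) else 0) *ᵥ x) ≤ s * (x ⬝ᵥ x) := by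
  refine spectralMatrix_mulVec_dotProduct_le hU (fun i => ?_) x
  split_ifs with h
  · rwa [Real.sq_sqrt (hlam i).le]
  · simpa using hs

lemma frobSq_spectralProj_mul_le {U : Matrix m m ℝ} {V : Matrix k k ℝ} (hU : Uᵀ * U = 1)
    (hV : Vᵀ * V = 1) {lam : m → ℝ} {mu : k → ℝ} (hlam : ∀ i, 0 < lam i)
    (hmu : ∀ j, 0 < mu j) {s t : ℝ} (hs : 0 ≤ s) (ht : 0 ≤ t) (X : Matrix m k ℝ) :
    frobSq (spectralMatrix U (fun i => if lam i ≤ s then 1 else 0) * X *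
        spectralMatrix V (fun j => if mu j ≤ t then 1 else 0)) ≤
      s * t * frobSq (spectralMatrix U (fun i => (√(lam i))⁻¹) * X *
        spectralMatrix V (fun j => (√(mu j))⁻¹)) := by
  set RU := spectralMatrix U (fun i => if lam i ≤ s then √(lam i) else 0)
  set RV := spectralMatrix V (fun j => if mu j ≤ t then √(mu j) else 0)
  set Y := spectralMatrix U (fun i => (√(lam i))⁻¹) * X * spectralMatrix V (fun j => (√(mu j))⁻¹)
  have hfactor : spectralMatrix U (fun i => if lam i ≤ s then 1 else 0) * X *
      spectralMatrix V (fun j => if mu j ≤ t then 1 else 0) = RU * Y * RV := by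
    rw [spectralMatrix_indicator_eq_mul hU hlam, spectralMatrix_indicator_eq_mul hV hmu,
      spectralMatrix_mul hV, mul_comm, ← spectralMatrix_mul hV]
    simp only [RU, RV, Y, Matrix.mul_assoc]
  rw [hfactor]
  calc frobSq (RU * Y * RV) ≤ t * frobSq (RU * Y) :=
        frobSq_mul_le_right _ _ (spectralMatrix_transpose _ _)
          (spectralMatrix_truncSqrt_mulVec_dotProduct_le hV hmu ht)
    _ ≤ t * (s * frobSq Y) := by
        gcongr
        exact frobSq_mul_le_left _ _ (spectralMatrix_truncSqrt_mulVec_dotProduct_le hU hlam hs)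
    _ = s * t * frobSq Y := by ring

end Projection

section BlockDiagonal

variable {L : Type*} [Fintype L] {p : L → Type*} [∀ ℓ, Fintype (p ℓ)]

open scoped MatrixOrder in
lemma posSemidef_blockDiagonal' [DecidableEq L] [∀ ℓ, DecidableEq (p ℓ)]
    {W : ∀ ℓ, Matrix (p ℓ) (p ℓ) ℝ} (hW : ∀ ℓ, (W ℓ).PosSemidef) :
    (blockDiagonal' W).PosSemidef := by
  have hfactor : ∀ ℓ, W ℓ = (CFC.sqrt (W ℓ))ᴴ * CFC.sqrt (W ℓ) := fun ℓ => by
    rw [← star_eq_conjTranspose, (CFC.sqrt_nonneg (W ℓ)).isSelfAdjoint.star_eq,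
      CFC.sqrt_mul_sqrt_self _ (hW ℓ).nonneg]
  have hW_eq : blockDiagonal' W = (blockDiagonal' fun ℓ => CFC.sqrt (W ℓ))ᴴ *
      blockDiagonal' fun ℓ => CFC.sqrt (W ℓ) := by
    rw [blockDiagonal'_conjTranspose, ← blockDiagonal'_mul]
    exact congrArg _ (funext hfactor)
  rw [hW_eq]
  exact posSemidef_conjTranspose_mul_self _

lemma blockDiagonal'_mul_submatrix_sigmaMk [DecidableEq L] {γ κ : Type*}
    (A : ∀ ℓ, Matrix (p ℓ) (p ℓ) ℝ)    (X : Matrix (Σ ℓ, p ℓ) γ ℝ) (ℓ : L) (c : κ → γ) :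
    (blockDiagonal' A * X).submatrix (Sigma.mk ℓ) c = A ℓ * X.submatrix (Sigma.mk ℓ) c := by
  ext i b
  simp only [submatrix_apply, mul_apply, Fintype.sum_sigma]
  rw [Finset.sum_eq_single ℓ (fun k _ hk => by simp [blockDiagonal'_apply_ne _ _ _ hk.symm])
    (by simp)]
  simp [blockDiagonal'_apply_eq]

lemma mul_blockDiagonal'_submatrix_sigmaMk [DecidableEq L] {γ κ : Type*} [Fintype γ]
    (X : Matrix γ (Σ ℓ, p ℓ) ℝ)    (B : ∀ ℓ, Matrix (p ℓ) (p ℓ) ℝ) (r : κ → γ) (k : L) :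
    (X * blockDiagonal' B).submatrix r (Sigma.mk k) = X.submatrix r (Sigma.mk k) * B k := by
  ext a j
  simp only [submatrix_apply, mul_apply, Fintype.sum_sigma]
  rw [Finset.sum_eq_single k (fun ℓ _ hℓ => by simp [blockDiagonal'_apply_ne _ _ _ hℓ])
    (by simp)]
  simp [blockDiagonal'_apply_eq]

lemma frobSq_eq_sum_frobSq_submatrix_sigmaMk (X : Matrix (Σ ℓ, p ℓ) (Σ ℓ, p ℓ) ℝ) :
    frobSq X = ∑ ℓ, ∑ k, frobSq (X.submatrix (Sigma.mk ℓ) (Sigma.mk k)) := by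
  simp only [frobSq, Fintype.sum_sigma, submatrix_apply]
  exact Finset.sum_congr rfl fun ℓ _ => Finset.sum_comm

variable {n : Type*} [Fintype n] [DecidableEq n]

open scoped MatrixOrder in
lemma Matrix.PosSemidef.sqrt_eq_of_mul_self {A B : Matrix n n ℝ} (hA : A.PosSemidef)
    (hB : B.PosSemidef) (h : B * B = A) : hA.sqrt = B := by
  -- `hA.sqrt` is `cfc Real.sqrt A`, so uniqueness of the CFC square root applies.
  have hsqrt_cfc : hA.sqrt = cfc Real.sqrt A := by
    rw [hA.1.cfc_eq, IsHermitian.cfc, Unitary.conjStarAlgAut_apply]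
    rfl
  rw [hsqrt_cfc, ← cfcₙ_eq_cfc, ← CFC.sqrt_eq_real_sqrt A hA.nonneg]
  exact CFC.sqrt_unique h hB.nonneg

lemma Matrix.PosSemidef.inv_sqrt_submatrix_eq_blockDiagonal' [DecidableEq L]
    [∀ ℓ, DecidableEq (p ℓ)] {A : Matrix n n ℝ}
    (hA : A.PosSemidef) (e : (Σ ℓ, p ℓ) ≃ n) {S W : ∀ ℓ, Matrix (p ℓ) (p ℓ) ℝ}
    (hS : ∀ ℓ, (S ℓ).PosSemidef) (hSW : ∀ ℓ, S ℓ * W ℓ = 1)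
    (hAS : A.submatrix e e = blockDiagonal' fun ℓ => S ℓ * S ℓ) :
    hA.sqrt⁻¹.submatrix e e = blockDiagonal' W := by
  have hsqrt : hA.sqrt = (blockDiagonal' S).submatrix e.symm e.symm := by
    refine hA.sqrt_eq_of_mul_self ((posSemidef_blockDiagonal' hS).submatrix _) ?_
    rw [submatrix_mul_equiv, ← blockDiagonal'_mul, ← hAS, submatrix_submatrix]
    simp
  have hinv : hA.sqrt⁻¹ = (blockDiagonal' W).submatrix e.symm e.symm := by
    refine inv_eq_right_inv ?_
    rw [hsqrt, submatrix_mul_equiv, ← blockDiagonal'_mul, funext hSW, ← Pi.one_def,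
      blockDiagonal'_one, submatrix_one_equiv]
  rw [hinv, submatrix_submatrix]
  simp

end BlockDiagonal

section Fibers

variable {n L : Type*} [DecidableEq L] {blk : n → L} {Sig D : Matrix n n ℝ}

lemma submatrix_sigmaFiberEquiv_eq_blockDiagonal'
    (hD : ∀ i j, D i j = if blk i = blk j then Sig i j else 0) :
    D.submatrix (Equiv.sigmaFiberEquiv blk) (Equiv.sigmaFiberEquiv blk) =
      blockDiagonal' fun ℓ => Matrix.of fun i j : {i : n // blk i = ℓ} => Sig i.1 j.1 := by
  ext ⟨ℓ, i⟩ ⟨k, j⟩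
  by_cases h : ℓ = k
  · subst h
    simp [hD, blockDiagonal'_apply_eq, i.2, j.2]
  · simp [hD, blockDiagonal'_apply_ne _ _ _ h, i.2, j.2, h]

lemma sub_submatrix_sigmaFiberEquiv_sigmaMk_of_ne
    (hD : ∀ i j, D i j = if blk i = blk j then Sig i j else 0) {ℓ k : L} (h : ℓ ≠ k) :
    ((Sig - D).submatrix (Equiv.sigmaFiberEquiv blk) (Equiv.sigmaFiberEquiv blk)).submatrix
      (Sigma.mk ℓ) (Sigma.mk k) =
      Matrix.of fun (i : {i : n // blk i = ℓ}) (j : {i : n // blk i = k}) => Sig i.1 j.1 := by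
  ext i j
  simp [hD, i.2, j.2, h]

variable [Fintype n] [DecidableEq n] [Fintype L]
  {U : ∀ ℓ, Matrix {i : n // blk i = ℓ} {i : n // blk i = ℓ} ℝ}
  {lam : ∀ ℓ, {i : n // blk i = ℓ} → ℝ}

lemma inv_sqrt_submatrix_sigmaFiberEquiv (hDpsd : D.PosSemidef)
    (hD : ∀ i j, D i j = if blk i = blk j then Sig i j else 0) (hU : ∀ ℓ, (U ℓ)ᵀ * U ℓ = 1)
    (hdecomp : ∀ ℓ, (Matrix.of fun i j : {i : n // blk i = ℓ} => Sig i.1 j.1) =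
      spectralMatrix (U ℓ) (lam ℓ))
    (hlam : ∀ ℓ i, 0 < lam ℓ i) :
    hDpsd.sqrt⁻¹.submatrix (Equiv.sigmaFiberEquiv blk) (Equiv.sigmaFiberEquiv blk) =
      blockDiagonal' fun ℓ => spectralMatrix (U ℓ) fun i => (√(lam ℓ i))⁻¹ := by
  refine hDpsd.inv_sqrt_submatrix_eq_blockDiagonal' _
    (S := fun ℓ => spectralMatrix (U ℓ) fun i => √(lam ℓ i))
    (fun ℓ => posSemidef_spectralMatrix fun i => Real.sqrt_nonneg _) (fun ℓ => ?_) ?_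
  · rw [spectralMatrix_mul (hU ℓ), ← spectralMatrix_one (hU ℓ)]
    exact congrArg _ (funext fun i => mul_inv_cancel₀ (Real.sqrt_pos.mpr (hlam ℓ i)).ne')
  · rw [submatrix_sigmaFiberEquiv_eq_blockDiagonal' hD]
    refine congrArg _ (funext fun ℓ => ?_)
    rw [hdecomp ℓ, spectralMatrix_mul (hU ℓ)]
    exact congrArg _ (funext fun i => (Real.mul_self_sqrt (hlam ℓ i).le).symm)

lemma whitened_submatrix_sigmaFiberEquiv_of_ne (hDpsd : D.PosSemidef)
    (hD : ∀ i j, D i j = if blk i = blk j then Sig i j else 0) (hU : ∀ ℓ, (U ℓ)ᵀ * U ℓ = 1)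
    (hdecomp : ∀ ℓ, (Matrix.of fun i j : {i : n // blk i = ℓ} => Sig i.1 j.1) =
      spectralMatrix (U ℓ) (lam ℓ))
    (hlam : ∀ ℓ i, 0 < lam ℓ i) {ℓ k : L} (h : ℓ ≠ k) :
    ((hDpsd.sqrt⁻¹ * (Sig - D) * hDpsd.sqrt⁻¹).submatrix (Equiv.sigmaFiberEquiv blk)
        (Equiv.sigmaFiberEquiv blk)).submatrix (Sigma.mk ℓ) (Sigma.mk k) =
      spectralMatrix (U ℓ) (fun i => (√(lam ℓ i))⁻¹) *
        (Matrix.of fun (i : {i : n // blk i = ℓ}) (j : {i : n // blk i = k}) => Sig i.1 j.1) *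
        spectralMatrix (U k) (fun i => (√(lam k i))⁻¹) := by
  rw [← submatrix_mul_equiv _ _ _ (Equiv.sigmaFiberEquiv blk),
    ← submatrix_mul_equiv _ _ _ (Equiv.sigmaFiberEquiv blk),
    inv_sqrt_submatrix_sigmaFiberEquiv hDpsd hD hU hdecomp hlam,
    mul_blockDiagonal'_submatrix_sigmaMk, blockDiagonal'_mul_submatrix_sigmaMk,
    sub_submatrix_sigmaFiberEquiv_sigmaMk_of_ne hD h]

end Fibers

theorem whitened_coupling_lower_bound_general
    {n L : Type*} [Fintype n] [DecidableEq n] [Fintype L] [DecidableEq L]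
    (blk : n → L)
    (Sig D M : Matrix n n ℝ)
    (hblocks : ∀ ℓ : L,
      (Matrix.of fun i j : {i : n // blk i = ℓ} => Sig i.1 j.1).PosDef)
    (hD : D.PosDef)
    (hDdef : ∀ i j, D i j = if blk i = blk j then Sig i j else 0)
    (hM : M = (hD.posSemidef.sqrt)⁻¹ * (Sig - D) * (hD.posSemidef.sqrt)⁻¹)
    (σ : L → ℝ)
    (hσ : ∀ ℓ, σ ℓ = (∑ i : {i : n // blk i = ℓ}, Sig i.1 i.1) /
      (Fintype.card {i : n // blk i = ℓ}))
    (U : ∀ ℓ : L, Matrix {i : n // blk i = ℓ} {i : n // blk i = ℓ} ℝ)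
    (lam : ∀ ℓ : L, {i : n // blk i = ℓ} → ℝ)
    (hU' : ∀ ℓ, (U ℓ)ᵀ * U ℓ = 1)
    (hdecomp : ∀ ℓ, (Matrix.of fun i j : {i : n // blk i = ℓ} => Sig i.1 j.1) =
      U ℓ * Matrix.diagonal (lam ℓ) * (U ℓ)ᵀ)
    (P : ∀ ℓ : L, Matrix {i : n // blk i = ℓ} {i : n // blk i = ℓ} ℝ)
    (hP : ∀ ℓ, P ℓ =
      U ℓ * Matrix.diagonal (fun i => if lam ℓ i ≤ 2 * σ ℓ then (1 : ℝ) else 0) * (U ℓ)ᵀ) :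
    opN M ≥ Real.sqrt ((1 / (4 * (Fintype.card n : ℝ))) *
      ∑ ℓ : L, ∑ k : L, if ℓ = k then 0 else
        frobN (P ℓ * (Matrix.of fun (i : {i : n // blk i = ℓ}) (j : {i : n // blk i = k}) => Sig i.1 j.1) * P k) ^ 2 / (σ ℓ * σ k)) := by
  set e := Equiv.sigmaFiberEquiv blk
  have hlam : ∀ ℓ i, 0 < lam ℓ i := fun ℓ =>
    pos_of_posDef_spectralMatrix (hU' ℓ) (by rw [spectralMatrix, ← hdecomp ℓ]; exact hblocks ℓ)
  have hσ_nonneg : ∀ ℓ, 0 ≤ σ ℓ := fun ℓ => hσ ℓ ▸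
    div_nonneg (Finset.sum_nonneg fun i _ => (hblocks ℓ).diag_pos.le) (Nat.cast_nonneg _)
  have hterm : ∀ ℓ k, (if ℓ = k then 0 else frobN (P ℓ * (Matrix.of fun (i : {i : n // blk i = ℓ})
      (j : {i : n // blk i = k}) => Sig i.1 j.1) * P k) ^ 2 / (σ ℓ * σ k)) ≤
      4 * frobSq ((M.submatrix e e).submatrix (Sigma.mk ℓ) (Sigma.mk k)) := by
    intro ℓ k
    split_ifs with h
    · exact mul_nonneg zero_le_four (frobSq_nonneg _)
    rw [frobN_sq, hP, hP, hM, whitened_submatrix_sigmaFiberEquiv_of_ne _ hDdef hU' hdecomp hlam h]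
    refine div_le_of_le_mul₀ (mul_nonneg (hσ_nonneg ℓ) (hσ_nonneg k))
      (mul_nonneg zero_le_four (frobSq_nonneg _)) ?_
    calc _ ≤ 2 * σ ℓ * (2 * σ k) * _ := frobSq_spectralProj_mul_le (hU' ℓ) (hU' k) (hlam ℓ)
            (hlam k) (by linarith [hσ_nonneg ℓ]) (by linarith [hσ_nonneg k]) _
      _ = _ := by ring
  refine (Real.sqrt_le_sqrt ?_).trans (sqrt_frobSq_div_card_le_opN M)
  calc _ ≤ 1 / (4 * (Fintype.card n : ℝ)) * (4 * frobSq M) := by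
        gcongr
        rw [← frobSq_submatrix_equiv M e e, frobSq_eq_sum_frobSq_submatrix_sigmaMk, Finset.mul_sum]
        gcongr with ℓ
        rw [Finset.mul_sum]
        gcongr with k
        exact hterm ℓ k
    _ = frobSq M / Fintype.card n := by ring

/-- lower bound on the whitened coupling norm in terms of
low-energy-projected off-diagonal blocks:
`‖M‖₂ ≥ ( (1/(4d)) ∑_{ℓ≠k} ‖P_ℓ Σ_{ℓk} P_k‖_F² / (σ_ℓ σ_k) )^{1/2}`. -/
theorem whitened_coupling_lower_bound
    {n L : Type*} [Fintype n] [DecidableEq n] [Fintype L] [DecidableEq L]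
    (blk : n → L)
    (Sig D M : Matrix n n ℝ)
    (hSig : Sig.PosSemidef)
    (hblocks : ∀ ℓ : L,
      (Matrix.of fun i j : {i : n // blk i = ℓ} => Sig i.1 j.1).PosDef)
    (hD : D.PosDef)
    (hDdef : ∀ i j, D i j = if blk i = blk j then Sig i j else 0)
    (hM : M = (hD.posSemidef.sqrt)⁻¹ * (Sig - D) * (hD.posSemidef.sqrt)⁻¹)
    (σ : L → ℝ)
    (hσ : ∀ ℓ, σ ℓ = (∑ i : {i : n // blk i = ℓ}, Sig i.1 i.1) /
      (Fintype.card {i : n // blk i = ℓ}))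
    (U : ∀ ℓ : L, Matrix {i : n // blk i = ℓ} {i : n // blk i = ℓ} ℝ)
    (lam : ∀ ℓ : L, {i : n // blk i = ℓ} → ℝ)
    (hU : ∀ ℓ, U ℓ * (U ℓ)ᵀ = 1)
    (hU' : ∀ ℓ, (U ℓ)ᵀ * U ℓ = 1)
    (hdecomp : ∀ ℓ, (Matrix.of fun i j : {i : n // blk i = ℓ} => Sig i.1 j.1) =
      U ℓ * Matrix.diagonal (lam ℓ) * (U ℓ)ᵀ)
    (P : ∀ ℓ : L, Matrix {i : n // blk i = ℓ} {i : n // blk i = ℓ} ℝ)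
    (hP : ∀ ℓ, P ℓ =
      U ℓ * Matrix.diagonal (fun i => if lam ℓ i ≤ 2 * σ ℓ then (1 : ℝ) else 0) * (U ℓ)ᵀ) :
    opN M ≥ Real.sqrt ((1 / (4 * (Fintype.card n : ℝ))) *
      ∑ ℓ : L, ∑ k : L, if ℓ = k then 0 else
        frobN (P ℓ * (Matrix.of fun (i : {i : n // blk i = ℓ}) (j : {i : n // blk i = k}) => Sig i.1 j.1) * P k) ^ 2 / (σ ℓ * σ k)) :=
  whitened_coupling_lower_bound_general blk Sig D M hblocks hD hDdef hM σ hσ U lam hU' hdecomp P hP
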